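/- Define h_T on decorated trees recursively: on the one-leaf tree, h_T is the identity; if T = Δ_T(T', i) (type II), h_T(T) is h_T(T') with a free leaf attached as rightmost child of the i-th node on its rightmost path; if T is a free leaf attached as leftmost child of the root of T' (type III), h_T(T) is h_T(T') with a free leaf attached below its rightmost leaf; if T = ⊕_T(T1, i, T2) (type IV), h_T(T) is obtained from h_T(T2) by replacing its rightmost leaf with the tree h_T(Δ_T(T1, i)) whose leaf labels (except the rightmost one) are increased by rpath(h_T(T2)). Then h_T is an involution on decorated trees with n edges for every n ≥ 1. -/

import Mathlib

/-- Rooted plane trees with integer labels on the leaves. -/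
inductive DTree where
  | leaf : ℤ → DTree
  | node : List DTree → DTree

mutual
/-- The list of leaf labels of a tree, in left-to-right (prefix traversal) order. -/
def leafLabels : DTree → List ℤ
  | .leaf l => [l]
  | .node ts => leafLabelsList ts
def leafLabelsList : List DTree → List ℤ
  | [] => []
  | t :: ts => leafLabels t ++ leafLabelsList ts
end

/-- The three conditions of decorated trees, for a subtree whose root is at depth `d`:
leaf labels are at least -1 and strictly less than the depth of their parent;
every internal node of positive depth `d` has a descendant leaf labeled at most `d - 2`;
and in any direct subtree of an internal node of depth `d`, a leaf labeled `d` is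
preceded in traversal order only by leaves labeled at least `d`. -/
inductive DecoAt : DTree → ℕ → Prop where
  | leaf {l : ℤ} {d : ℕ} (h1 : -1 ≤ l) (h2 : l < (d : ℤ) - 1) : DecoAt (.leaf l) d
  | node {ts : List DTree} {d : ℕ} (hne : ts ≠ [])
      (h2 : 0 < d → ∃ x ∈ leafLabelsList ts, x ≤ (d : ℤ) - 2)
      (h3 : ∀ t' ∈ ts, ∀ a b, leafLabels t' = a ++ (d : ℤ) :: b → ∀ x ∈ a, (d : ℤ) ≤ x)
      (h4 : ∀ t' ∈ ts, DecoAt t' (d + 1)) : DecoAt (.node ts) d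

/-- A decorated tree: the root is at depth 0. -/
def IsDeco (T : DTree) : Prop := DecoAt T 0

/-- The number of free leaves (leaves labeled -1). -/
def fl (T : DTree) : ℕ := (leafLabels T).count (-1)

mutual
/-- Increment leaf labels, where the counter `m` is the number of free leaves (from
the left) that still must be incremented; once it reaches 0, remaining free leaves
are left untouched. Returns the new tree and the remaining counter. -/
def incUpTo : DTree → ℕ → DTree × ℕ
  | .leaf l, m =>
      if l = -1 then (if 0 < m then (.leaf 0, m - 1) else (.leaf (-1), m))
      else (.leaf (l + 1), m)
  | .node ts, m =>
      let p := incList ts m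
      (.node p.1, p.2)
def incList : List DTree → ℕ → List DTree × ℕ
  | [], m => ([], m)
  | t :: ts, m =>
      let p := incUpTo t m
      let q := incList ts p.2
      (p.1 :: q.1, q.2)
end

/-- Δ_T(T,i): attach `T` under a new root vertex and add 1 to every leaf label,
except for the last `i` free leaves (in traversal order). -/
def deltaT (T : DTree) (i : ℕ) : DTree := .node [(incUpTo T (fl T - i)).1]

mutual
/-- Subtract 1 from every non-free leaf label. -/
def decLeaves : DTree → DTree
  | .leaf l => if l = -1 then .leaf (-1) else .leaf (l - 1)
  | .node ts => .node (decList ts)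
def decList : List DTree → List DTree
  | [] => []
  | t :: ts => decLeaves t :: decList ts
end

/-- Π_T: remove the root (which has a unique child) and subtract 1 from every
non-free leaf label. -/
def piT : DTree → DTree
  | .node [t] => decLeaves t
  | t => t

/-- ⊕_T(T1,i,T2): identify the roots of Δ_T(T1,i) and T2, with the subtrees of
Δ_T(T1,i) placed to the left. -/
def oplusT (T1 : DTree) (i : ℕ) (T2 : DTree) : DTree :=
  match deltaT T1 i, T2 with
  | .node a, .node b => .node (a ++ b)
  | _, _ => deltaT T1 i

mutual
/-- Attach a free leaf as rightmost child of the `i`-th node on the rightmost path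
(the root being the first node of the rightmost path). -/
def attachR : DTree → ℕ → DTree
  | .leaf _, _ => .leaf (-1)
  | .node ts, i =>
      if i ≤ 1 then .node (ts ++ [.leaf (-1)])
      else .node (attachRLast ts (i - 1))
def attachRLast : List DTree → ℕ → List DTree
  | [], _ => []
  | [t], i => [attachR t i]
  | t :: ts, i => t :: attachRLast ts i
end

mutual
/-- Attach a free leaf below the rightmost leaf, which becomes an internal node. -/
def growR : DTree → DTree
  | .leaf _ => .node [.leaf (-1)]
  | .node ts => .node (growRLast ts)
def growRLast : List DTree → List DTree
  | [] => []
  | [t] => [growR t]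
  | t :: ts => t :: growRLast ts
end

mutual
/-- The number of edges on the rightmost path (from the root to the rightmost leaf). -/
def rpath : DTree → ℕ
  | .leaf _ => 0
  | .node ts => rpathLast ts
def rpathLast : List DTree → ℕ
  | [] => 0
  | [t] => rpath t + 1
  | _ :: ts => rpathLast ts
end

mutual
/-- Add `r` to every leaf label. -/
def addAll (r : ℤ) : DTree → DTree
  | .leaf l => .leaf (l + r)
  | .node ts => .node (addAllList r ts)
def addAllList (r : ℤ) : List DTree → List DTree
  | [] => []
  | t :: ts => addAll r t :: addAllList r ts
end

mutual
/-- Add `r` to every leaf label except the rightmost leaf. -/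
def addExceptLast (r : ℤ) : DTree → DTree
  | .leaf l => .leaf l
  | .node ts => .node (addExceptLastList r ts)
def addExceptLastList (r : ℤ) : List DTree → List DTree
  | [] => []
  | [t] => [addExceptLast r t]
  | t :: ts => addAll r t :: addExceptLastList r ts
end

mutual
/-- Replace the rightmost leaf by the tree `repl`. -/
def replaceR (repl : DTree) : DTree → DTree
  | .leaf _ => repl
  | .node ts => .node (replaceRList repl ts)
def replaceRList (repl : DTree) : List DTree → List DTree
  | [] => []
  | [t] => [replaceR repl t]
  | t :: ts => t :: replaceRList repl ts
end

/-- The involution h_T on decorated trees, as a relation, following its recursive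
definition on the four structural types of decorated trees. -/
inductive HT : DTree → DTree → Prop where
  /-- Type I: the one-leaf tree is fixed. -/
  | base : HT (.node [.leaf (-1)]) (.node [.leaf (-1)])
  /-- Type II: `T = Δ_T(T', i)`; attach a free leaf as rightmost child of the `i`-th
  node on the rightmost path of `h_T(T')`. -/
  | typeII {T' U' : DTree} {i : ℕ} (h1 : 1 ≤ i) (h2 : i ≤ fl T') (h : HT T' U') :
      HT (deltaT T' i) (attachR U' i)
  /-- Type III: `T` is a free leaf attached as leftmost child of the root of `T'`;
  attach a free leaf below the rightmost leaf of `h_T(T')`. -/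
  | typeIII {ts : List DTree} {U' : DTree} (hne : ts ≠ []) (h : HT (.node ts) U') :
      HT (.node (.leaf (-1) :: ts)) (growR U')
  /-- Type IV: `T = ⊕_T(T1, i, T2)`; replace the rightmost leaf of `h_T(T2)` by
  `h_T(Δ_T(T1, i))` with all leaf labels except the rightmost one increased by
  `rpath (h_T(T2))`. -/
  | typeIV {T1 T2 U1 U2 : DTree} {i : ℕ} (h1 : 1 ≤ i) (h2 : i ≤ fl T1)
      (hA : HT (deltaT T1 i) U1) (hB : HT T2 U2) :
      HT (oplusT T1 i T2) (replaceR (addExceptLast (rpath U2 : ℤ) U1) U2)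

mutual
/-- The number of vertices of a tree. -/
def nverts : DTree → ℕ
  | .leaf _ => 1
  | .node ts => 1 + nvertsList ts
def nvertsList : List DTree → ℕ
  | [] => 0
  | t :: ts => nverts t + nvertsList ts
end

/-- The number of edges of a rooted tree. -/
def nedges (T : DTree) : ℕ := nverts T - 1


/-!
`h_T` is defined along the decomposition of a decorated tree as `Δ_T(T', i)`, as a free leaf
prepended at the root, or as `⊕_T(T₁, i, T₂)`, and it answers each of these by an operation on
the rightmost path of the image: attaching a free leaf at its `i`-th node, growing a free leaf
below the rightmost leaf, or replacing the rightmost leaf. By induction, `h_T` preserves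
decoratedness and the number of vertices, and it swaps the number of free leaves with the
length of the rightmost path. For the converse direction one shows, again by induction, that
`h_T` also sends the three rightmost-path operations back to the three constructions
(attaching at depth `i` to `Δ_T(·, i)`, growing to prepending a free leaf, replacing the
rightmost leaf by a shifted tree to `⊕_T`); then `h_T (h_T T) = T` follows constructor by
constructor. On trees, these identities reduce to the fact that the partial increment behind
`Δ_T` commutes with the rightmost-path operations: they only change the tree at or after its
last free leaf, which the increment never reaches.
-/

lemma leafLabelsList_append (a b : List DTree) :
    leafLabelsList (a ++ b) = leafLabelsList a ++ leafLabelsList b := by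
  induction a with
  | nil => rfl
  | cons t a ih => simp [leafLabelsList, ih]

@[simp] lemma leafLabelsList_singleton (u : DTree) : leafLabelsList [u] = leafLabels u := by
  simp [leafLabelsList]

lemma leafLabels_node_append (a b : List DTree) :
    leafLabels (.node (a ++ b)) = leafLabelsList a ++ leafLabelsList b :=
  leafLabelsList_append a b

lemma mem_leafLabelsList {x : ℤ} {ts : List DTree} :
    x ∈ leafLabelsList ts ↔ ∃ u ∈ ts, x ∈ leafLabels u := by
  induction ts with
  | nil => simp [leafLabelsList]
  | cons t ts ih => simp [leafLabelsList, ih]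

lemma nvertsList_append (a b : List DTree) :
    nvertsList (a ++ b) = nvertsList a + nvertsList b := by
  induction a with
  | nil => simp [nvertsList]
  | cons t a ih => simp [nvertsList, ih, Nat.add_assoc]

lemma nverts_node_append (a b : List DTree) :
    nverts (.node (a ++ b)) = 1 + nvertsList a + nvertsList b := by
  rw [nverts, nvertsList_append, Nat.add_assoc]

@[simp] lemma nvertsList_singleton (u : DTree) : nvertsList [u] = nverts u := by
  simp [nvertsList]

lemma fl_node_append (a b : List DTree) :
    fl (.node (a ++ b)) = fl (.node a) + fl (.node b) := by
  simp only [fl, leafLabels, leafLabelsList_append, List.count_append]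

lemma fl_node_singleton (u : DTree) : fl (.node [u]) = fl u := by
  simp [fl, leafLabels]

lemma fl_node_cons (t : DTree) (ts : List DTree) :
    fl (.node (t :: ts)) = fl t + fl (.node ts) := by
  simp only [fl, leafLabels, leafLabelsList, List.count_append]

lemma rpathLast_cons (t : DTree) {ts : List DTree} (h : ts ≠ []) :
    rpathLast (t :: ts) = rpathLast ts := by
  cases ts with
  | nil => exact absurd rfl h
  | cons => rfl

lemma replaceRList_cons (X t : DTree) {ts : List DTree} (h : ts ≠ []) :
    replaceRList X (t :: ts) = t :: replaceRList X ts := by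
  cases ts with
  | nil => exact absurd rfl h
  | cons => rfl

lemma attachRLast_cons (t : DTree) {ts : List DTree} (i : ℕ) (h : ts ≠ []) :
    attachRLast (t :: ts) i = t :: attachRLast ts i := by
  cases ts with
  | nil => exact absurd rfl h
  | cons => rfl

lemma addExceptLastList_cons (r : ℤ) (t : DTree) {ts : List DTree} (h : ts ≠ []) :
    addExceptLastList r (t :: ts) = addAll r t :: addExceptLastList r ts := by
  cases ts with
  | nil => exact absurd rfl h
  | cons => rfl

@[simp] lemma rpath_node_concat (ss : List DTree) (u : DTree) :
    rpath (.node (ss ++ [u])) = rpath u + 1 := by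
  induction ss with
  | nil => rfl
  | cons s ss ih => exact (rpathLast_cons s (by simp)).trans ih

@[simp] lemma replaceR_node_concat (X : DTree) (ss : List DTree) (u : DTree) :
    replaceR X (.node (ss ++ [u])) = .node (ss ++ [replaceR X u]) := by
  induction ss with
  | nil => rfl
  | cons s ss ih =>
    simp only [replaceR, DTree.node.injEq] at ih ⊢
    rw [List.cons_append, replaceRList_cons X s (by simp), ih, List.cons_append]

@[simp] lemma addExceptLast_node_concat (r : ℤ) (ss : List DTree) (u : DTree) :
    addExceptLast r (.node (ss ++ [u])) = .node (addAllList r ss ++ [addExceptLast r u]) := by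
  induction ss with
  | nil => rfl
  | cons s ss ih =>
    simp only [addExceptLast, DTree.node.injEq] at ih ⊢
    rw [List.cons_append, addExceptLastList_cons r s (by simp), ih]
    rfl

lemma attachR_node_concat (ss : List DTree) (u : DTree) {i : ℕ} (hi : 2 ≤ i) :
    attachR (.node (ss ++ [u])) i = .node (ss ++ [attachR u (i - 1)]) := by
  rw [attachR, if_neg (by omega), DTree.node.injEq]
  induction ss with
  | nil => rfl
  | cons s ss ih => rw [List.cons_append, attachRLast_cons s _ (by simp), ih, List.cons_append]

lemma attachR_node_one (ts : List DTree) : attachR (.node ts) 1 = .node (ts ++ [.leaf (-1)]) :=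
  rfl

lemma exists_eq_node_concat_of_rpath_pos {t : DTree} (h : 0 < rpath t) :
    ∃ ss u, t = .node (ss ++ [u]) := by
  obtain _ | ts := t
  · exact absurd h (lt_irrefl 0)
  · rcases eq_or_ne ts [] with rfl | hts
    · exact absurd h (lt_irrefl 0)
    · obtain ⟨ss, u, rfl⟩ := (List.eq_nil_or_concat' _).resolve_left hts
      exact ⟨ss, u, rfl⟩

lemma incList_append (a b : List DTree) (m : ℕ) :
    incList (a ++ b) m =
      ((incList a m).1 ++ (incList b (incList a m).2).1, (incList b (incList a m).2).2) := by
  induction a generalizing m with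
  | nil => rfl
  | cons t a ih => simp [incList, ih]

lemma incUpTo_node_concat (ss : List DTree) (u : DTree) (m : ℕ) :
    incUpTo (.node (ss ++ [u])) m =
      (.node ((incList ss m).1 ++ [(incUpTo u (incList ss m).2).1]),
        (incUpTo u (incList ss m).2).2) := by
  simp [incUpTo, incList_append, incList]

/-! ### The partial increment `incUpTo` -/

mutual
theorem incUpTo_snd : ∀ (t : DTree) (m : ℕ), (incUpTo t m).2 = m - fl t
  | .leaf l, m => by
    by_cases h : l = -1 <;> by_cases hm : 0 < m <;> simp [incUpTo, fl, leafLabels, h, hm]; omega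
  | .node ts, m => incList_snd ts m
theorem incList_snd : ∀ (ts : List DTree) (m : ℕ), (incList ts m).2 = m - fl (.node ts)
  | [], m => rfl
  | t :: ts, m => by
    simp only [incList, incList_snd ts, incUpTo_snd t, fl_node_cons, Nat.sub_sub]
end

mutual
theorem rpath_incUpTo : ∀ (t : DTree) (m : ℕ), rpath (incUpTo t m).1 = rpath t
  | .leaf l, m => by by_cases h : l = -1 <;> by_cases hm : 0 < m <;> simp [incUpTo, rpath, h, hm]
  | .node ts, m => rpathLast_incList ts m
theorem rpathLast_incList : ∀ (ts : List DTree) (m : ℕ),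
    rpathLast (incList ts m).1 = rpathLast ts
  | [], m => rfl
  | [t], m => by simp [incList, rpathLast, rpath_incUpTo t]
  | t :: t' :: ts, m => by
    rw [rpathLast_cons t (by simp), ← rpathLast_incList (t' :: ts) (incUpTo t m).2]
    exact rpathLast_cons _ (by simp [incList])
end

mutual
theorem nverts_incUpTo : ∀ (t : DTree) (m : ℕ), nverts (incUpTo t m).1 = nverts t
  | .leaf l, m => by by_cases h : l = -1 <;> by_cases hm : 0 < m <;> simp [incUpTo, nverts, h, hm]
  | .node ts, m => congrArg (1 + ·) (nvertsList_incList ts m)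
theorem nvertsList_incList : ∀ (ts : List DTree) (m : ℕ),
    nvertsList (incList ts m).1 = nvertsList ts
  | [], m => rfl
  | t :: ts, m => by simp only [incList, nvertsList, nverts_incUpTo t, nvertsList_incList ts]
end

mutual
theorem fl_incUpTo : ∀ (t : DTree) (m : ℕ), (∀ x ∈ leafLabels t, -1 ≤ x) →
    fl (incUpTo t m).1 = fl t - m
  | .leaf l, m, hge => by
    have hl : -1 ≤ l := hge l (by simp [leafLabels])
    by_cases h : l = -1 <;> by_cases hm : 0 < m <;>
      simp [incUpTo, fl, leafLabels, h, hm, List.count_singleton] <;> omega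
  | .node ts, m, hge => fl_incList ts m hge
theorem fl_incList : ∀ (ts : List DTree) (m : ℕ), (∀ x ∈ leafLabelsList ts, -1 ≤ x) →
    fl (.node (incList ts m).1) = fl (.node ts) - m
  | [], m, _ => by simp [incList, fl, leafLabels, leafLabelsList]
  | t :: ts, m, hge => by
    have hge' := List.forall_mem_append.1 hge
    simp only [incList, fl_node_cons, fl_incUpTo t m hge'.1, fl_incList ts _ hge'.2, incUpTo_snd]
    omega
end

mutual
theorem neg_one_le_of_mem_incUpTo : ∀ (t : DTree) (m : ℕ), (∀ x ∈ leafLabels t, -1 ≤ x) →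
    ∀ x ∈ leafLabels (incUpTo t m).1, -1 ≤ x
  | .leaf l, m, hge => by
    have hl : -1 ≤ l := hge l (by simp [leafLabels])
    by_cases h : l = -1 <;> by_cases hm : 0 < m <;> simp [incUpTo, leafLabels, h, hm] <;> omega
  | .node ts, m, hge => neg_one_le_of_mem_incList ts m hge
theorem neg_one_le_of_mem_incList : ∀ (ts : List DTree) (m : ℕ),
    (∀ x ∈ leafLabelsList ts, -1 ≤ x) → ∀ x ∈ leafLabelsList (incList ts m).1, -1 ≤ x
  | [], m, _ => by simp [incList, leafLabelsList]
  | t :: ts, m, hge => by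
    have hge' := List.forall_mem_append.1 hge
    exact List.forall_mem_append.2 ⟨neg_one_le_of_mem_incUpTo t m hge'.1,
      neg_one_le_of_mem_incList ts _ hge'.2⟩
end

mutual
theorem decLeaves_incUpTo : ∀ (t : DTree) (m : ℕ), (∀ x ∈ leafLabels t, -1 ≤ x) →
    decLeaves (incUpTo t m).1 = t
  | .leaf l, m, hge => by
    have hl : -1 ≤ l := hge l (by simp [leafLabels])
    by_cases h : l = -1
    · subst h
      by_cases hm : 0 < m <;> simp [incUpTo, decLeaves, hm]
    · simp [incUpTo, decLeaves, h, show l + 1 ≠ -1 by omega]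
  | .node ts, m, hge => congrArg DTree.node (decList_incList ts m hge)
theorem decList_incList : ∀ (ts : List DTree) (m : ℕ), (∀ x ∈ leafLabelsList ts, -1 ≤ x) →
    decList (incList ts m).1 = ts
  | [], m, _ => rfl
  | t :: ts, m, hge => by
    have hge' := List.forall_mem_append.1 hge
    exact congrArg₂ List.cons (decLeaves_incUpTo t m hge'.1) (decList_incList ts _ hge'.2)
end

mutual
theorem incUpTo_of_fl_le : ∀ (t : DTree) (m : ℕ), (∀ x ∈ leafLabels t, -1 ≤ x) → fl t ≤ m →
    incUpTo t m = (addAll 1 t, m - fl t)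
  | .leaf l, m, hge, hm => by
    have hl : -1 ≤ l := hge l (by simp [leafLabels])
    by_cases h : l = -1
    · subst h
      simp only [fl, leafLabels, List.count_singleton_self] at hm
      simp [incUpTo, addAll, fl, leafLabels, show 0 < m by omega]
    · simp [incUpTo, addAll, fl, leafLabels, h]
  | .node ts, m, hge, hm => by
    simp only [incUpTo, addAll, incList_of_fl_le ts m hge hm]
theorem incList_of_fl_le : ∀ (ts : List DTree) (m : ℕ), (∀ x ∈ leafLabelsList ts, -1 ≤ x) →
    fl (.node ts) ≤ m → incList ts m = (addAllList 1 ts, m - fl (.node ts))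
  | [], m, _, _ => rfl
  | t :: ts, m, hge, hm => by
    have hge' := List.forall_mem_append.1 hge
    rw [fl_node_cons] at hm ⊢
    rw [incList, incUpTo_of_fl_le t m hge'.1 (by omega),
      incList_of_fl_le ts _ hge'.2 (by omega), Nat.sub_sub]
    rfl
end

mutual
theorem incUpTo_addAll : ∀ (s : DTree) (r m : ℕ), 1 ≤ r → (∀ x ∈ leafLabels s, -1 ≤ x) →
    incUpTo (addAll r s) m = (addAll (r + 1) s, m)
  | .leaf l, r, m, hr, hge => by
    have hl : -1 ≤ l := hge l (by simp [leafLabels])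
    simp [incUpTo, addAll, show l + (r : ℤ) ≠ -1 by omega, add_assoc]
  | .node ts, r, m, hr, hge => by
    simp only [addAll, incUpTo, incList_addAllList ts r m hr hge]
theorem incList_addAllList : ∀ (ts : List DTree) (r m : ℕ), 1 ≤ r →
    (∀ x ∈ leafLabelsList ts, -1 ≤ x) → incList (addAllList r ts) m = (addAllList (r + 1) ts, m)
  | [], r, m, _, _ => rfl
  | t :: ts, r, m, hr, hge => by
    have hge' := List.forall_mem_append.1 hge
    simp only [addAllList, incList, incUpTo_addAll t r m hr hge'.1,
      incList_addAllList ts r m hr hge'.2]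
end

/-! ### Operations on the rightmost path -/

inductive RightmostLabel (x : ℤ) : DTree → Prop
  | leaf : RightmostLabel x (.leaf x)
  | node (ss : List DTree) {u : DTree} : RightmostLabel x u → RightmostLabel x (.node (ss ++ [u]))

section rightmost

variable {t X : DTree} {x y : ℤ}

theorem RightmostLabel.leafLabels_eq (h : RightmostLabel x t) :
    leafLabels t = (leafLabels t).dropLast ++ [x] := by
  induction h with
  | leaf => rfl
  | node ss _ ih =>
    rw [leafLabels_node_append, leafLabelsList_singleton, ih,
      ← List.append_assoc, List.dropLast_concat]

theorem RightmostLabel.leafLabels_ne_nil (h : RightmostLabel x t) : leafLabels t ≠ [] := by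
  rw [h.leafLabels_eq]
  simp

theorem rightmostLabel_addExceptLast (r : ℤ) (h : RightmostLabel x t) :
    RightmostLabel x (addExceptLast r t) := by
  induction h with
  | leaf => exact .leaf
  | node ss _ ih => simpa using RightmostLabel.node _ ih

theorem RightmostLabel.leafLabels_replaceR (h : RightmostLabel x t) :
    leafLabels (replaceR X t) = (leafLabels t).dropLast ++ leafLabels X := by
  induction h with
  | leaf => rfl
  | node ss hu ih =>
    simp only [replaceR_node_concat, leafLabels_node_append, leafLabelsList_singleton, ih,
      List.dropLast_append_of_ne_nil hu.leafLabels_ne_nil, List.append_assoc]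

theorem RightmostLabel.rpath_replaceR (h : RightmostLabel x t) :
    rpath (replaceR X t) = rpath t + rpath X := by
  induction h with
  | leaf => simp [replaceR, rpath]
  | node ss _ ih => simp only [replaceR_node_concat, rpath_node_concat, ih]; omega

theorem RightmostLabel.nverts_replaceR (h : RightmostLabel x t) :
    nverts (replaceR X t) + 1 = nverts t + nverts X := by
  induction h with
  | leaf => simp [replaceR, nverts, Nat.add_comm]
  | node ss _ ih =>
    simp only [replaceR_node_concat, nverts_node_append, nvertsList_singleton]; omega

theorem RightmostLabel.fl_replaceR (h : RightmostLabel (-1) t) :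
    fl (replaceR X t) + 1 = fl t + fl X := by
  rw [fl, fl, fl, h.leafLabels_replaceR, List.count_append]
  conv_rhs => rw [h.leafLabels_eq]
  rw [List.count_append, List.count_singleton_self]
  omega

theorem RightmostLabel.unique (hx : RightmostLabel x t) (hy : RightmostLabel y t) : x = y := by
  have := hx.leafLabels_eq.symm.trans hy.leafLabels_eq
  simpa using this

mutual
theorem leafLabels_addAll : ∀ (r : ℤ) (t : DTree),
    leafLabels (addAll r t) = (leafLabels t).map (· + r)
  | _, .leaf _ => rfl
  | r, .node ts => leafLabelsList_addAllList r ts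
theorem leafLabelsList_addAllList : ∀ (r : ℤ) (ts : List DTree),
    leafLabelsList (addAllList r ts) = (leafLabelsList ts).map (· + r)
  | _, [] => rfl
  | r, t :: ts => by
    simp [addAllList, leafLabelsList, leafLabels_addAll r t, leafLabelsList_addAllList r ts]
end

mutual
theorem nverts_addAll : ∀ (r : ℤ) (t : DTree), nverts (addAll r t) = nverts t
  | _, .leaf _ => rfl
  | r, .node ts => congrArg (1 + ·) (nvertsList_addAllList r ts)
theorem nvertsList_addAllList : ∀ (r : ℤ) (ts : List DTree),
    nvertsList (addAllList r ts) = nvertsList ts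
  | _, [] => rfl
  | r, t :: ts => by
    simp only [addAllList, nvertsList, nverts_addAll r t, nvertsList_addAllList r ts]
end

theorem RightmostLabel.leafLabels_addExceptLast (r : ℤ) (h : RightmostLabel x t) :
    leafLabels (addExceptLast r t) = (leafLabels t).dropLast.map (· + r) ++ [x] := by
  induction h with
  | leaf => rfl
  | node ss hu ih =>
    simp only [addExceptLast_node_concat, leafLabels_node_append, leafLabelsList_singleton, ih,
      leafLabelsList_addAllList, List.dropLast_append_of_ne_nil hu.leafLabels_ne_nil,
      List.map_append, List.append_assoc]

theorem RightmostLabel.rpath_addExceptLast (r : ℤ) (h : RightmostLabel x t) :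
    rpath (addExceptLast r t) = rpath t := by
  induction h with
  | leaf => rfl
  | node ss _ ih => simp [ih]

theorem RightmostLabel.nverts_addExceptLast (r : ℤ) (h : RightmostLabel x t) :
    nverts (addExceptLast r t) = nverts t := by
  induction h with
  | leaf => rfl
  | node ss _ ih => simp [nverts_node_append, nvertsList_addAllList, ih]

theorem RightmostLabel.fl_addExceptLast {r : ℤ} (h : RightmostLabel (-1) t)
    (hge : ∀ x ∈ leafLabels t, -1 ≤ x) (hr : 1 ≤ r) : fl (addExceptLast r t) = 1 := by
  rw [fl, h.leafLabels_addExceptLast, List.count_append, List.count_singleton_self,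
    List.count_eq_zero_of_not_mem]
  intro hmem
  obtain ⟨y, hy, hyr⟩ := List.mem_map.1 hmem
  have := hge y (List.mem_of_mem_dropLast hy)
  omega

theorem RightmostLabel.fl_replaceR_addExceptLast {P : DTree} {r : ℕ} (ht : RightmostLabel (-1) t)
    (hP : RightmostLabel (-1) P) (hge : ∀ x ∈ leafLabels P, -1 ≤ x) (hr : 1 ≤ r) :
    fl (replaceR (addExceptLast r P) t) = fl t := by
  have := ht.fl_replaceR (X := addExceptLast r P)
  rw [hP.fl_addExceptLast hge (by exact_mod_cast hr)] at this
  omega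

theorem RightmostLabel.one_le_fl (h : RightmostLabel (-1) t) : 1 ≤ fl t := by
  rw [fl, h.leafLabels_eq, List.count_append, List.count_singleton_self]
  omega

theorem RightmostLabel.incUpTo_replaceR (h : RightmostLabel (-1) t) {m : ℕ} (hm : m < fl t) :
    incUpTo (replaceR X t) m = (replaceR (incUpTo X 0).1 (incUpTo t m).1, (incUpTo t m).2) := by
  induction h generalizing m with
  | leaf =>
    obtain rfl : m = 0 := by simpa [fl, leafLabels] using hm
    exact Prod.ext rfl (by simp [incUpTo_snd])
  | node ss hu ih =>
    have := hu.one_le_fl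
    rw [fl_node_append, fl_node_singleton] at hm
    rw [replaceR_node_concat, incUpTo_node_concat, incUpTo_node_concat,
      ih (by rw [incList_snd]; omega), replaceR_node_concat]

theorem RightmostLabel.incUpTo_addExceptLast_zero {r : ℕ} (h : RightmostLabel (-1) t)
    (hge : ∀ x ∈ leafLabels t, -1 ≤ x) (hr : 1 ≤ r) :
    incUpTo (addExceptLast r t) 0 = (addExceptLast (r + 1) t, 0) := by
  induction h with
  | leaf => rfl
  | node ss hu ih =>
    rw [leafLabels_node_append, List.forall_mem_append, leafLabelsList_singleton] at hge
    rw [addExceptLast_node_concat, incUpTo_node_concat, incList_addAllList ss r 0 hr hge.1,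
      ih hge.2, addExceptLast_node_concat]

theorem RightmostLabel.incUpTo_fl_sub_one (h : RightmostLabel (-1) t)
    (hge : ∀ x ∈ leafLabels t, -1 ≤ x) : (incUpTo t (fl t - 1)).1 = addExceptLast 1 t := by
  induction h with
  | leaf => rfl
  | @node ss u hu ih =>
    rw [leafLabels_node_append, List.forall_mem_append, leafLabelsList_singleton] at hge
    have hu1 := hu.one_le_fl
    rw [incUpTo_node_concat, fl_node_append, fl_node_singleton,
      incList_of_fl_le ss _ hge.1 (by omega), show fl (.node ss) + fl u - 1 - fl (.node ss) =
        fl u - 1 by omega, ih hge.2, addExceptLast_node_concat]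

mutual
theorem growR_eq_replaceR : ∀ t : DTree, growR t = replaceR (.node [.leaf (-1)]) t
  | .leaf _ => rfl
  | .node ts => congrArg DTree.node (growRLast_eq_replaceRList ts)
theorem growRLast_eq_replaceRList : ∀ ts : List DTree,
    growRLast ts = replaceRList (.node [.leaf (-1)]) ts
  | [] => rfl
  | [t] => congrArg ([·]) (growR_eq_replaceR t)
  | t :: t' :: ts => congrArg (t :: ·) (growRLast_eq_replaceRList (t' :: ts))
end

theorem RightmostLabel.fl_growR (ht : RightmostLabel (-1) t) : fl (growR t) = fl t := by
  have := ht.fl_replaceR (X := .node [.leaf (-1)])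
  rw [growR_eq_replaceR]
  simp_all [fl, leafLabels, leafLabelsList]

theorem RightmostLabel.rpath_growR (ht : RightmostLabel x t) :
    rpath (growR t) = rpath t + 1 := by
  rw [growR_eq_replaceR, ht.rpath_replaceR]
  rfl

theorem RightmostLabel.nverts_growR (ht : RightmostLabel x t) :
    nverts (growR t) = nverts t + 1 := by
  have := ht.nverts_replaceR (X := .node [.leaf (-1)])
  rw [growR_eq_replaceR]
  simp_all [nverts, nvertsList]

end rightmost

section attachR

variable {i : ℕ}

theorem leafLabels_attachR (t : DTree) (h1 : 1 ≤ i) (h2 : i ≤ rpath t) :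
    leafLabels (attachR t i) = leafLabels t ++ [-1] := by
  induction i generalizing t with
  | zero => omega
  | succ i ih =>
    obtain ⟨ss, u, rfl⟩ := exists_eq_node_concat_of_rpath_pos (by omega : 0 < rpath t)
    rcases Nat.eq_zero_or_pos i with rfl | hi
    · rw [attachR_node_one, leafLabels_node_append]
      rfl
    · rw [rpath_node_concat] at h2
      rw [attachR_node_concat _ _ (by omega), Nat.add_sub_cancel, leafLabels_node_append,
        leafLabels_node_append, leafLabelsList_singleton, leafLabelsList_singleton,
        ih u hi (by omega), List.append_assoc]

theorem fl_attachR (t : DTree) (h1 : 1 ≤ i) (h2 : i ≤ rpath t) :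
    fl (attachR t i) = fl t + 1 := by
  simp [fl, leafLabels_attachR t h1 h2]

theorem rpath_attachR (t : DTree) (h1 : 1 ≤ i) (h2 : i ≤ rpath t) : rpath (attachR t i) = i := by
  induction i generalizing t with
  | zero => omega
  | succ i ih =>
    obtain ⟨ss, u, rfl⟩ := exists_eq_node_concat_of_rpath_pos (by omega : 0 < rpath t)
    rcases Nat.eq_zero_or_pos i with rfl | hi
    · rw [attachR_node_one, rpath_node_concat]
      rfl
    · rw [rpath_node_concat] at h2
      rw [attachR_node_concat _ _ (by omega), Nat.add_sub_cancel, rpath_node_concat,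
        ih u hi (by omega)]

theorem nverts_attachR (t : DTree) (h1 : 1 ≤ i) (h2 : i ≤ rpath t) :
    nverts (attachR t i) = nverts t + 1 := by
  induction i generalizing t with
  | zero => omega
  | succ i ih =>
    obtain ⟨ss, u, rfl⟩ := exists_eq_node_concat_of_rpath_pos (by omega : 0 < rpath t)
    rcases Nat.eq_zero_or_pos i with rfl | hi
    · rw [attachR_node_one, nverts_node_append, nvertsList_singleton]
      rfl
    · rw [rpath_node_concat] at h2
      rw [attachR_node_concat _ _ (by omega), Nat.add_sub_cancel, nverts_node_append,
        nverts_node_append, nvertsList_singleton, nvertsList_singleton, ih u hi (by omega)]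
      omega

theorem incUpTo_attachR (t : DTree) (m : ℕ) (h1 : 1 ≤ i) (h2 : i ≤ rpath t)
    (hm : m ≤ fl t) : incUpTo (attachR t i) m = (attachR (incUpTo t m).1 i, (incUpTo t m).2) := by
  induction i generalizing t m with
  | zero => omega
  | succ i ih =>
    obtain ⟨ss, u, rfl⟩ := exists_eq_node_concat_of_rpath_pos (by omega : 0 < rpath t)
    rw [fl_node_append, fl_node_singleton] at hm
    rcases Nat.eq_zero_or_pos i with rfl | hi
    · have hsnd : (incUpTo u (incList ss m).2).2 = 0 := by
        rw [incUpTo_snd, incList_snd]; omega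
      simp [attachR_node_one, incUpTo, incList_append, incList, hsnd]
    · rw [rpath_node_concat] at h2
      rw [attachR_node_concat _ _ (by omega), incUpTo_node_concat, incUpTo_node_concat,
        Nat.add_sub_cancel, ih u _ hi (by omega) (by rw [incList_snd]; omega),
        attachR_node_concat _ _ (by omega), Nat.add_sub_cancel]

end attachR

/-! ### Decorated trees -/

/-- The third condition of decorated trees, read on the leaf labels `L` of a direct subtree of
a node of depth `d`. -/
def PrecededByGE (d : ℤ) (L : List ℤ) : Prop := ∀ a b, L = a ++ d :: b → ∀ x ∈ a, d ≤ x

namespace PrecededByGE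

variable {d : ℤ} {L M : List ℤ}

theorem of_forall_le (h : ∀ x ∈ L, d ≤ x) : PrecededByGE d L := by
  rintro a b rfl x hx
  exact h x (List.mem_append_left _ hx)

theorem of_append (h : PrecededByGE d (L ++ M)) : PrecededByGE d L := by
  rintro a b rfl
  exact h a (b ++ M) (by simp)

theorem append_of_lt (h : PrecededByGE d L) (hM : ∀ x ∈ M, d < x) :
    PrecededByGE d (L ++ M) := by
  intro a b hab
  rcases List.append_eq_append_iff.1 hab with ⟨c, rfl, hc⟩ | ⟨c, rfl, hc⟩
  · exact absurd (hM d (by rw [hc]; simp)) (lt_irrefl d)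
  · obtain _ | ⟨z, c⟩ := c
    · exact absurd (hM d (by rw [List.nil_append] at hc; simp [← hc])) (lt_irrefl d)
    · obtain ⟨rfl, -⟩ := List.cons.inj hc
      exact h a c rfl

theorem append_singleton (h : PrecededByGE d L) {z : ℤ} (hz : z ≠ d) :
    PrecededByGE d (L ++ [z]) := by
  intro a b hab
  rcases List.append_eq_append_iff.1 hab with ⟨c, rfl, hc⟩ | ⟨c, rfl, hc⟩
  · obtain _ | ⟨y, c⟩ := c <;> simp_all
  · obtain _ | ⟨y, c⟩ := c
    · simp_all
    · obtain ⟨rfl, -⟩ := List.cons.inj hc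
      exact h a c rfl

theorem singleton {z : ℤ} (hz : z ≠ d) : PrecededByGE d [z] :=
  (of_forall_le (L := []) (by simp)).append_singleton hz

theorem map {e : ℤ} {f : ℤ → ℤ} (h : PrecededByGE d L) (hf : ∀ z, f z = e → z = d)
    (hmono : ∀ x, d ≤ x → e ≤ f x) : PrecededByGE e (L.map f) := by
  intro a b hab
  obtain ⟨l₁, l₂, rfl, rfl, hl₂⟩ := List.map_eq_append_iff.1 hab
  obtain ⟨z, l₃, rfl, hz, -⟩ := List.map_eq_cons_iff.1 hl₂
  obtain rfl := hf z hz
  simp only [List.mem_map]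
  rintro _ ⟨x, hx, rfl⟩
  exact hmono x (h l₁ l₃ rfl x hx)

theorem map_add (h : PrecededByGE d L) (r : ℤ) : PrecededByGE (d + r) (L.map (· + r)) :=
  h.map (fun _ _ => by omega) (fun _ _ => by omega)

end PrecededByGE

namespace DecoAt

variable {t u u' : DTree} {ss ts : List DTree} {d : ℕ} {x : ℤ}

theorem exists_le (h : DecoAt (.node ts) d) (hd : 0 < d) :
    ∃ x ∈ leafLabelsList ts, x ≤ (d : ℤ) - 2 := by
  cases h with | node _ h2 _ _ => exact h2 hd

theorem precededByGE (h : DecoAt (.node ts) d) {u : DTree} (hu : u ∈ ts) :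
    PrecededByGE d (leafLabels u) := by
  cases h with | node _ _ h3 _ => exact h3 u hu

theorem of_mem (h : DecoAt (.node ts) d) {u : DTree} (hu : u ∈ ts) : DecoAt u (d + 1) := by
  cases h with | node _ _ _ h4 => exact h4 u hu

theorem neg_one_le (h : DecoAt t d) : ∀ x ∈ leafLabels t, -1 ≤ x := by
  induction h with
  | leaf h1 => simpa [leafLabels] using h1
  | node _ _ _ _ ih =>
    intro x hx
    obtain ⟨u, hu, hxu⟩ := mem_leafLabelsList.1 hx
    exact ih u hu x hxu

theorem exists_rightmostLabel (h : DecoAt t d) : ∃ x, RightmostLabel x t := by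
  induction h with
  | leaf => exact ⟨_, .leaf⟩
  | @node ts _ hne _ _ _ ih =>
    obtain ⟨ss, u, rfl⟩ := (List.eq_nil_or_concat' _).resolve_left hne
    obtain ⟨x, hx⟩ := ih u (by simp)
    exact ⟨x, .node ss hx⟩

/-- The rightmost leaf of a subtree rooted at depth `d` has label `< d`: a label `d` there
would force every label of the last subtree to be `≥ d`, against its second condition. -/
theorem lt_of_rightmostLabel (h : DecoAt t d) (hx : RightmostLabel x t) : x < d := by
  induction h with
  | leaf _ h2 =>
    cases hx
    omega
  | @node ts d _ _ h3 h4 ih =>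
    obtain _ | @⟨ss, u, hu⟩ := hx
    have hmem : u ∈ ss ++ [u] := by simp
    have hlt : x < d + 1 := by exact_mod_cast ih u hmem hu
    by_contra hge
    obtain rfl : x = d := by omega
    obtain _ | ⟨us⟩ := u
    · cases hu
      cases h4 _ hmem with | leaf _ h2 => push_cast at h2; omega
    · obtain ⟨y, hy, hyle⟩ := (h4 _ hmem).exists_le (Nat.succ_pos d)
      change y ∈ leafLabels (.node us) at hy
      rw [hu.leafLabels_eq, List.mem_append, List.mem_singleton] at hy
      rcases hy with hy | rfl
      · have := h3 _ hmem _ [] hu.leafLabels_eq y hy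
        omega
      · omega


theorem node_concat (h : DecoAt (.node (ss ++ [u])) d) (hu' : DecoAt u' (d + 1))
    (hlow : ∀ x ∈ leafLabels u, x ≤ (d : ℤ) - 2 → ∃ y ∈ leafLabels u', y ≤ (d : ℤ) - 2)
    (hprec : PrecededByGE d (leafLabels u')) : DecoAt (.node (ss ++ [u'])) d := by
  refine .node (by simp) (fun hd => ?_) (fun v hv => ?_) (fun v hv => ?_)
  · obtain ⟨x, hx, hxd⟩ := h.exists_le hd
    rw [leafLabelsList_append, List.mem_append, leafLabelsList_singleton] at hx
    rw [leafLabelsList_append, leafLabelsList_singleton]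
    rcases hx with hx | hx
    · exact ⟨x, List.mem_append_left _ hx, hxd⟩
    · obtain ⟨y, hy, hyd⟩ := hlow x hx hxd
      exact ⟨y, List.mem_append_right _ hy, hyd⟩
  · rcases List.mem_append.1 hv with hv | hv
    · exact h.precededByGE (List.mem_append_left _ hv)
    · rwa [List.mem_singleton.1 hv]
  · rcases List.mem_append.1 hv with hv | hv
    · exact h.of_mem (List.mem_append_left _ hv)
    · rwa [List.mem_singleton.1 hv]

theorem node_append_free (h : DecoAt (.node ts) d) : DecoAt (.node (ts ++ [.leaf (-1)])) d := by
  refine .node (by simp) (fun hd => ?_) (fun v hv => ?_) (fun v hv => ?_)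
  · obtain ⟨x, hx, hxd⟩ := h.exists_le hd
    exact ⟨x, by rw [leafLabelsList_append]; exact List.mem_append_left _ hx, hxd⟩
  · rcases List.mem_append.1 hv with hv | hv
    · exact h.precededByGE hv
    · rw [List.mem_singleton.1 hv]
      exact PrecededByGE.singleton (by omega)
  · rcases List.mem_append.1 hv with hv | hv
    · exact h.of_mem hv
    · rw [List.mem_singleton.1 hv]
      exact .leaf le_rfl (by omega)

theorem attachR {i : ℕ} (h : DecoAt t d) (h1 : 1 ≤ i) (h2 : i ≤ rpath t) :
    DecoAt (attachR t i) d := by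
  induction i generalizing t d with
  | zero => omega
  | succ i ih =>
    obtain ⟨ss, u, rfl⟩ := exists_eq_node_concat_of_rpath_pos (by omega : 0 < rpath t)
    rcases Nat.eq_zero_or_pos i with rfl | hi
    · exact h.node_append_free
    · rw [rpath_node_concat] at h2
      have hu : u ∈ ss ++ [u] := by simp
      rw [attachR_node_concat _ _ (by omega), Nat.add_sub_cancel]
      refine h.node_concat (ih (h.of_mem hu) hi (by omega)) (fun x hx hxd => ?_) ?_
      · exact ⟨x, by rw [leafLabels_attachR u hi (by omega)]; exact List.mem_append_left _ hx, hxd⟩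
      · rw [leafLabels_attachR u hi (by omega)]
        exact (h.precededByGE hu).append_singleton (by omega)

end DecoAt

theorem decoAt_node_free (d : ℕ) : DecoAt (.node [.leaf (-1)]) d :=
  .node (by simp) (fun hd => ⟨-1, by simp [leafLabels], by omega⟩)
    (fun v hv => by
      rw [List.mem_singleton.1 hv]
      exact PrecededByGE.singleton (by omega))
    (fun v hv => by
      rw [List.mem_singleton.1 hv]
      exact .leaf le_rfl (by omega))

lemma decList_eq_map (ts : List DTree) : decList ts = ts.map decLeaves := by
  induction ts with
  | nil => rfl
  | cons t ts ih => simp [decList, ih]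

lemma addAllList_eq_map (r : ℤ) (ts : List DTree) : addAllList r ts = ts.map (addAll r) := by
  induction ts with
  | nil => rfl
  | cons t ts ih => simp [addAllList, ih]

mutual
theorem leafLabels_decLeaves : ∀ t : DTree,
    leafLabels (decLeaves t) = (leafLabels t).map fun l => if l = -1 then -1 else l - 1
  | .leaf l => by by_cases h : l = -1 <;> simp [decLeaves, leafLabels, h]
  | .node ts => leafLabelsList_decList ts
theorem leafLabelsList_decList : ∀ ts : List DTree,
    leafLabelsList (decList ts) = (leafLabelsList ts).map fun l => if l = -1 then -1 else l - 1
  | [] => rfl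
  | t :: ts => by
    simp only [decList, leafLabelsList, leafLabels_decLeaves t, leafLabelsList_decList ts,
      List.map_append]
end

theorem DecoAt.decLeaves {t : DTree} {d : ℕ} (h : DecoAt t (d + 1))
    (hside : 0 < d ∨ ∃ ts, t = .node ts) : DecoAt (decLeaves t) d := by
  generalize he : d + 1 = e at h
  induction h generalizing d with
  | leaf h1 h2 =>
    rename_i l _
    have hd : 0 < d := hside.resolve_right (by simp)
    subst he
    by_cases hl : l = -1 <;> simp only [_root_.decLeaves, hl, ite_true, ite_false] <;>
      exact .leaf (by omega) (by push_cast at h2 ⊢; omega)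
  | @node ts e hne h2 h3 h4 ih =>
    subst he
    simp only [_root_.decLeaves, decList_eq_map]
    refine .node (by simpa using hne) (fun hd => ?_) (fun v hv => ?_) (fun v hv => ?_)
    · obtain ⟨x, hx, hxd⟩ := h2 (by omega)
      refine ⟨if x = -1 then -1 else x - 1, ?_, by split_ifs <;> push_cast at hxd ⊢ <;> omega⟩
      rw [← decList_eq_map, leafLabelsList_decList]
      exact List.mem_map_of_mem hx
    · obtain ⟨u, hu, rfl⟩ := List.mem_map.1 hv
      rw [leafLabels_decLeaves]
      refine PrecededByGE.map (d := (d + 1 : ℕ)) (h3 u hu) (fun z hz => ?_) (fun x hx => ?_) <;>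
        split_ifs at * <;> push_cast at * <;> omega
    · obtain ⟨u, hu, rfl⟩ := List.mem_map.1 hv
      exact ih u hu (Or.inl (by omega)) rfl

theorem DecoAt.addAll {s : DTree} {d : ℕ} (h : DecoAt s d) (hd : 1 ≤ d) (r : ℕ) :
    DecoAt (addAll r s) (d + r) := by
  induction h with
  | leaf h1 h2 => exact .leaf (by omega) (by push_cast at h2 ⊢; omega)
  | @node ts d hne h2 h3 h4 ih =>
    simp only [_root_.addAll, addAllList_eq_map]
    refine .node (by simpa using hne) (fun _ => ?_) (fun v hv => ?_) (fun v hv => ?_)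
    · obtain ⟨x, hx, hxd⟩ := h2 hd
      refine ⟨x + r, ?_, by push_cast; omega⟩
      rw [← addAllList_eq_map, leafLabelsList_addAllList]
      exact List.mem_map_of_mem hx
    · obtain ⟨u, hu, rfl⟩ := List.mem_map.1 hv
      rw [leafLabels_addAll, Nat.cast_add]
      exact PrecededByGE.map_add (h3 u hu) r
    · obtain ⟨u, hu, rfl⟩ := List.mem_map.1 hv
      rw [Nat.add_right_comm]
      exact ih u hu (by omega)

theorem DecoAt.addExceptLast {t : DTree} {d r : ℕ} (h : DecoAt t d) (hr : 1 ≤ r)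
    (hroot : d = 0 → RightmostLabel (-1) t) : DecoAt (addExceptLast r t) (d + r) := by
  induction h with
  | leaf h1 h2 => exact .leaf h1 (by push_cast at h2 ⊢; omega)
  | @node ts d hne h2 h3 h4 ih =>
    obtain ⟨ss, u, rfl⟩ := (List.eq_nil_or_concat' _).resolve_left hne
    have hu : u ∈ ss ++ [u] := by simp
    obtain ⟨xu, hxu⟩ := (h4 u hu).exists_rightmostLabel
    have hxu_lt : xu < d + 1 := by exact_mod_cast (h4 u hu).lt_of_rightmostLabel hxu
    have hlabels : leafLabels (_root_.addExceptLast r u) =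
        (leafLabels u).dropLast.map (· + (r : ℤ)) ++ [xu] := hxu.leafLabels_addExceptLast _
    rw [addExceptLast_node_concat, addAllList_eq_map]
    refine .node (by simp) (fun _ => ?_) (fun v hv => ?_) (fun v hv => ?_)
    · rw [← addAllList_eq_map, leafLabelsList_append, leafLabelsList_addAllList,
        leafLabelsList_singleton, hlabels]
      rcases Nat.eq_zero_or_pos d with rfl | hd
      · obtain rfl := (RightmostLabel.node ss hxu).unique (hroot rfl)
        exact ⟨-1, by simp, by omega⟩
      obtain ⟨x, hx, hxd⟩ := h2 hd
      rw [leafLabelsList_append, leafLabelsList_singleton, hxu.leafLabels_eq] at hx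
      simp only [List.mem_append, List.mem_singleton] at hx
      rcases hx with hx | hx | rfl
      · exact ⟨x + r, List.mem_append_left _ (List.mem_map_of_mem hx), by omega⟩
      · exact ⟨x + r, List.mem_append_right _ (List.mem_append_left _ (List.mem_map_of_mem hx)),
          by omega⟩
      · exact ⟨x, by simp, by omega⟩
    · rcases List.mem_append.1 hv with hv | hv
      · obtain ⟨w, hw, rfl⟩ := List.mem_map.1 hv
        rw [leafLabels_addAll, Nat.cast_add]
        exact PrecededByGE.map_add (h3 w (List.mem_append_left _ hw)) r
      · rw [List.mem_singleton.1 hv, hlabels]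
        refine PrecededByGE.append_singleton ?_ (by push_cast; omega)
        rw [Nat.cast_add]
        exact (PrecededByGE.of_append (M := [xu]) (hxu.leafLabels_eq ▸ h3 u hu)).map_add r
    · rcases List.mem_append.1 hv with hv | hv
      · obtain ⟨w, hw, rfl⟩ := List.mem_map.1 hv
        rw [Nat.add_right_comm]
        exact (h4 w (List.mem_append_left _ hw)).addAll (by omega) r
      · rw [List.mem_singleton.1 hv, Nat.add_right_comm]
        exact ih u hu (by omega)

/-- By `hXge`, a label of `X` can equal the depth of an ancestor of the replaced leaf only for
its parent, and within `X` such a label is preceded only by larger ones. -/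
theorem DecoAt.replaceR {t X : DTree} {d : ℕ} (h : DecoAt t d) (ht : RightmostLabel (-1) t)
    (hX : DecoAt X (d + rpath t)) (hXr : RightmostLabel (-1) X)
    (hXge : ∀ y ∈ (leafLabels X).dropLast, (d : ℤ) + rpath t ≤ y + 1) :
    DecoAt (replaceR X t) d := by
  induction ht generalizing d with
  | leaf => exact hX
  | @node ss u hu ih =>
    have hmem : u ∈ ss ++ [u] := by simp
    rw [rpath_node_concat, ← Nat.add_assoc, Nat.add_right_comm] at hX
    rw [rpath_node_concat] at hXge
    push_cast at hXge
    have hlabels : leafLabels (_root_.replaceR X u) =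
        ((leafLabels u).dropLast ++ (leafLabels X).dropLast) ++ [-1] := by
      rw [hu.leafLabels_replaceR, List.append_assoc]
      exact congrArg _ hXr.leafLabels_eq
    rw [replaceR_node_concat]
    have hu' := ih (h.of_mem hmem) hX fun y hy => by have := hXge y hy; push_cast; omega
    refine h.node_concat hu' (fun x hx hxd => ?_) ?_
    · rw [hlabels]
      rw [hu.leafLabels_eq, List.mem_append, List.mem_singleton] at hx
      rcases hx with hx | rfl
      · exact ⟨x, by simp [hx], hxd⟩
      · exact ⟨-1, by simp, hxd⟩
    · rw [hlabels]
      refine PrecededByGE.append_singleton ?_ (by omega)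
      cases hu with
      | leaf =>
        refine PrecededByGE.of_forall_le fun y hy => ?_
        have := hXge y (by simpa [leafLabels] using hy)
        simp only [rpath] at this
        omega
      | node ss' hv =>
        refine PrecededByGE.append_of_lt ?_ fun y hy => ?_
        · exact PrecededByGE.of_append (M := [-1])
            ((RightmostLabel.node ss' hv).leafLabels_eq ▸ h.precededByGE hmem)
        · have := hXge y hy
          rw [rpath_node_concat] at this
          omega

theorem IsDeco.rightmostLabel {t : DTree} (h : IsDeco t) : RightmostLabel (-1) t := by
  obtain ⟨x, hx⟩ := DecoAt.exists_rightmostLabel h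
  have hlt := DecoAt.lt_of_rightmostLabel h hx
  have hge := DecoAt.neg_one_le h x (by rw [hx.leafLabels_eq]; simp)
  obtain rfl : x = -1 := by push_cast at hlt; omega
  exact hx

theorem IsDeco.exists_node {t : DTree} (h : IsDeco t) : ∃ ts, t = .node ts ∧ ts ≠ [] := by
  cases h with
  | leaf h1 h2 => push_cast at h2; omega
  | node hne => exact ⟨_, rfl, hne⟩

theorem IsDeco.of_subset {ts ss : List DTree} (h : IsDeco (.node ts)) (hsub : ss ⊆ ts)
    (hne : ss ≠ []) : IsDeco (.node ss) :=
  .node hne (fun h0 => absurd h0 (lt_irrefl 0)) (fun _ hu => DecoAt.precededByGE h (hsub hu))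
    (fun _ hu => DecoAt.of_mem h (hsub hu))

theorem IsDeco.growR {t : DTree} (h : IsDeco t) : IsDeco (growR t) := by
  rw [growR_eq_replaceR]
  exact DecoAt.replaceR h h.rightmostLabel (decoAt_node_free _) (.node [] .leaf)
    (by simp [leafLabels, leafLabelsList])

theorem IsDeco.one_le_rpath {t : DTree} (h : IsDeco t) : 1 ≤ rpath t := by
  obtain ⟨ts, rfl, hne⟩ := h.exists_node
  obtain ⟨ss, u, rfl⟩ := (List.eq_nil_or_concat' _).resolve_left hne
  simp

theorem IsDeco.replaceR_addExceptLast {t P : DTree} (ht : IsDeco t) (hP : IsDeco P) :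
    IsDeco (replaceR (addExceptLast (rpath t) P) t) := by
  have hr := ht.one_le_rpath
  refine DecoAt.replaceR ht ht.rightmostLabel ?_ (rightmostLabel_addExceptLast _ hP.rightmostLabel)
    fun y hy => ?_
  · simpa using DecoAt.addExceptLast hP hr fun _ => hP.rightmostLabel
  · rw [hP.rightmostLabel.leafLabels_addExceptLast, List.dropLast_concat] at hy
    obtain ⟨z, hz, rfl⟩ := List.mem_map.1 hy
    have := DecoAt.neg_one_le hP z (List.mem_of_mem_dropLast hz)
    push_cast
    omega

theorem IsDeco.of_deltaT {t : DTree} {i : ℕ} (h : IsDeco (deltaT t i))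
    (hge : ∀ x ∈ leafLabels t, -1 ≤ x) (ht : ∃ ts, t = .node ts) : IsDeco t := by
  have hc : DecoAt (incUpTo t (fl t - i)).1 (0 + 1) := DecoAt.of_mem h (List.mem_singleton_self _)
  obtain ⟨ts, rfl⟩ := ht
  have := hc.decLeaves (Or.inr ⟨_, rfl⟩)
  rwa [decLeaves_incUpTo _ _ hge] at this

/-! ### `Δ_T` and `⊕_T` against the operations on the rightmost path -/

section deltaT

variable {t P X : DTree} {i j k : ℕ}

lemma leafLabels_deltaT : leafLabels (deltaT t i) = leafLabels (incUpTo t (fl t - i)).1 :=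
  leafLabelsList_singleton _

lemma rpath_deltaT : rpath (deltaT t i) = rpath t + 1 := by
  rw [deltaT, ← List.nil_append [_], rpath_node_concat, rpath_incUpTo]

lemma nverts_deltaT : nverts (deltaT t i) = nverts t + 1 := by
  rw [deltaT, nverts, nvertsList_singleton, nverts_incUpTo, Nat.add_comm]

lemma fl_deltaT (hge : ∀ x ∈ leafLabels t, -1 ≤ x) (hi : i ≤ fl t) : fl (deltaT t i) = i := by
  rw [deltaT, fl_node_singleton, fl_incUpTo t _ hge]
  omega

lemma attachR_deltaT (h1 : 1 ≤ i) (h2 : i ≤ rpath t) (hj : j ≤ fl t) :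
    attachR (deltaT t j) (i + 1) = deltaT (attachR t i) (j + 1) := by
  rw [deltaT, deltaT, ← List.nil_append [_], attachR_node_concat _ _ (by omega),
    Nat.add_sub_cancel, fl_attachR t h1 h2, Nat.add_sub_add_right,
    incUpTo_attachR t _ h1 h2 (by omega)]
  rfl

theorem RightmostLabel.replaceR_deltaT (ht : RightmostLabel (-1) t) (hX : fl X = 1) (hk : 1 ≤ k) :
    replaceR (incUpTo X 0).1 (deltaT t k) = deltaT (replaceR X t) k := by
  have hfl : fl (replaceR X t) = fl t := by have := ht.fl_replaceR (X := X); omega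
  have := ht.one_le_fl
  rw [deltaT, deltaT, hfl, ht.incUpTo_replaceR (by omega)]
  rfl

theorem RightmostLabel.growR_deltaT (ht : RightmostLabel (-1) t) (hk : 1 ≤ k) :
    growR (deltaT t k) = deltaT (growR t) k := by
  rw [growR_eq_replaceR, growR_eq_replaceR]
  exact ht.replaceR_deltaT (X := .node [.leaf (-1)]) rfl hk

theorem RightmostLabel.replaceR_addExceptLast_deltaT {r : ℕ} (ht : RightmostLabel (-1) t)
    (hP : RightmostLabel (-1) P) (hge : ∀ x ∈ leafLabels P, -1 ≤ x) (hr : 1 ≤ r) (hk : 1 ≤ k) :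
    replaceR (addExceptLast (r + 1) P) (deltaT t k) =
      deltaT (replaceR (addExceptLast r P) t) k := by
  rw [← ht.replaceR_deltaT (hP.fl_addExceptLast hge (by exact_mod_cast hr)) hk,
    hP.incUpTo_addExceptLast_zero hge hr]

theorem RightmostLabel.deltaT_one (hP : RightmostLabel (-1) P)
    (hge : ∀ x ∈ leafLabels P, -1 ≤ x) :
    deltaT P 1 = replaceR (addExceptLast 1 P) (.node [.leaf (-1)]) := by
  rw [deltaT, hP.incUpTo_fl_sub_one hge]
  rfl

end deltaT

section cons

variable {c X Q : DTree} {ts : List DTree} {j k : ℕ}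

def DTree.children : DTree → List DTree
  | .leaf _ => []
  | .node ts => ts

lemma rpath_node_cons (hts : ts ≠ []) : rpath (.node (c :: ts)) = rpath (.node ts) :=
  rpathLast_cons c hts

lemma nverts_node_cons : nverts (.node (c :: ts)) = nverts c + nverts (.node ts) := by
  simp only [nverts, nvertsList]
  omega

lemma replaceR_node_cons (X : DTree) (hts : ts ≠ []) :
    replaceR X (.node (c :: ts)) = .node (c :: (replaceR X (.node ts)).children) :=
  congrArg DTree.node (replaceRList_cons X c hts)

lemma attachR_node_cons {k : ℕ} (hts : ts ≠ []) (hk : 1 ≤ k) :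
    attachR (.node (c :: ts)) k = .node (c :: (attachR (.node ts) k).children) := by
  rcases Nat.lt_or_ge k 2 with hk1 | hk2
  · obtain rfl : k = 1 := by omega
    rfl
  · simp only [attachR, if_neg (by omega : ¬k ≤ 1), attachRLast_cons c _ hts, DTree.children]

lemma oplusT_node (Q : DTree) (j : ℕ) :
    oplusT Q j (.node ts) = .node ((incUpTo Q (fl Q - j)).1 :: ts) :=
  rfl


lemma attachR_node_eq_node (k : ℕ) :
    attachR (.node ts) k = .node (attachR (.node ts) k).children := by
  unfold attachR
  split_ifs <;> rfl

lemma growR_node_cons (hts : ts ≠ []) :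
    growR (.node (c :: ts)) = .node (c :: (growR (.node ts)).children) := by
  rw [growR_eq_replaceR, growR_eq_replaceR, replaceR_node_cons _ hts]

lemma rpath_oplusT (hts : ts ≠ []) : rpath (oplusT Q j (.node ts)) = rpath (.node ts) :=
  rpath_node_cons hts

lemma replaceR_oplusT (hts : ts ≠ []) :
    replaceR X (oplusT Q j (.node ts)) = oplusT Q j (replaceR X (.node ts)) :=
  replaceR_node_cons X hts

lemma growR_oplusT (hts : ts ≠ []) :
    growR (oplusT Q j (.node ts)) = oplusT Q j (growR (.node ts)) := by
  rw [growR_eq_replaceR, growR_eq_replaceR, replaceR_oplusT hts]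

lemma attachR_oplusT (hts : ts ≠ []) (hk : 1 ≤ k) :
    attachR (oplusT Q j (.node ts)) k = oplusT Q j (attachR (.node ts) k) := by
  rw [oplusT_node, attachR_node_cons hts hk, attachR_node_eq_node k]
  rfl

end cons


/-! ### The map `h_T` -/

namespace HT

variable {T U : DTree}

theorem exists_node_left (h : HT T U) : ∃ ts, T = .node ts ∧ ts ≠ [] := by
  induction h with
  | base => exact ⟨_, rfl, by simp⟩
  | typeII => exact ⟨_, rfl, by simp⟩
  | typeIII => exact ⟨_, rfl, by simp⟩
  | typeIV _ _ _ _ _ ih =>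
    obtain ⟨ts, rfl, -⟩ := ih
    exact ⟨_, oplusT_node _ _, by simp⟩

theorem neg_one_le_left (h : HT T U) : ∀ x ∈ leafLabels T, -1 ≤ x := by
  induction h with
  | base => simp [leafLabels, leafLabelsList]
  | typeII _ _ _ ih =>
    rw [leafLabels_deltaT]
    exact neg_one_le_of_mem_incUpTo _ _ ih
  | typeIII _ _ ih =>
    intro x hx
    rcases List.mem_append.1 hx with hx | hx
    · simp_all [leafLabels]
    · exact ih x hx
  | typeIV _ _ _ hB ihA ihB =>
    obtain ⟨ts, rfl, -⟩ := hB.exists_node_left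
    intro x hx
    rcases List.mem_append.1 hx with hx | hx
    · exact ihA x (by rwa [leafLabels_deltaT])
    · exact ihB x hx


theorem isDeco_of_deltaT {T' U' : DTree} {i : ℕ} (h : HT T' U') (hT : IsDeco (deltaT T' i)) :
    IsDeco T' :=
  hT.of_deltaT h.neg_one_le_left (h.exists_node_left.imp fun _ h => h.1)

theorem isDeco_fl_rpath_nverts (h : HT T U) (hT : IsDeco T) :
    IsDeco U ∧ fl U = rpath T ∧ rpath U = fl T ∧ nverts U = nverts T := by
  induction h with
  | base => exact ⟨decoAt_node_free 0, rfl, rfl, rfl⟩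
  | @typeII T' U' i h1 h2 h ih =>
    obtain ⟨hU', hfl, hrp, hnv⟩ := ih (h.isDeco_of_deltaT hT)
    have hi : i ≤ rpath U' := hrp ▸ h2
    refine ⟨DecoAt.attachR hU' h1 hi, ?_, ?_, ?_⟩
    · rw [fl_attachR _ h1 hi, hfl, rpath_deltaT]
    · rw [rpath_attachR _ h1 hi, fl_deltaT h.neg_one_le_left h2]
    · rw [nverts_attachR _ h1 hi, hnv, nverts_deltaT]
  | @typeIII ts U' hne h ih =>
    obtain ⟨hU', hfl, hrp, hnv⟩ := ih (hT.of_subset (List.subset_cons_self _ _) hne)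
    have hU'r := hU'.rightmostLabel
    refine ⟨hU'.growR, ?_, ?_, ?_⟩
    · rw [hU'r.fl_growR, hfl, rpath_node_cons hne]
    · rw [hU'r.rpath_growR, hrp, fl_node_cons]
      simp [fl, leafLabels, Nat.add_comm]
    · rw [hU'r.nverts_growR, hnv, nverts_node_cons]
      simp [nverts, Nat.add_comm]
  | @typeIV T1 T2 U1 U2 i h1 h2 hA hB ihA ihB =>
    obtain ⟨ts, rfl, hne⟩ := hB.exists_node_left
    rw [oplusT_node] at hT ⊢
    obtain ⟨hU1, -, hrp1, hnv1⟩ := ihA (hT.of_subset (by simp) (by simp))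
    obtain ⟨hU2, hfl2, hrp2, hnv2⟩ := ihB (hT.of_subset (List.subset_cons_self _ _) hne)
    have hU1r := hU1.rightmostLabel
    have hU2r := hU2.rightmostLabel
    have hge := DecoAt.neg_one_le hU1
    refine ⟨hU2.replaceR_addExceptLast hU1, ?_, ?_, ?_⟩
    · rw [hU2r.fl_replaceR_addExceptLast hU1r hge hU2.one_le_rpath, hfl2, rpath_node_cons hne]
    · rw [hU2r.rpath_replaceR, hU1r.rpath_addExceptLast, hrp1, hrp2, fl_node_cons, deltaT,
        fl_node_singleton, Nat.add_comm]
    · have := hU2r.nverts_replaceR (X := addExceptLast (rpath U2) U1)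
      rw [hU1r.nverts_addExceptLast, hnv1, hnv2, nverts_deltaT] at this
      rw [nverts_node_cons, nverts_incUpTo]
      omega


theorem attachR {A B : DTree} (h : HT A B) (hA : IsDeco A) {i : ℕ} (h1 : 1 ≤ i)
    (h2 : i ≤ rpath A) : HT (attachR A i) (deltaT B i) := by
  induction h generalizing i with
  | base =>
    obtain rfl : i = 1 := le_antisymm h2 h1
    exact typeIII (by simp) base
  | @typeII A' B' j hj1 hj2 h ih =>
    have hA' := h.isDeco_of_deltaT hA
    obtain ⟨-, hflB', hrpB', -⟩ := h.isDeco_fl_rpath_nverts hA'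
    rw [rpath_deltaT] at h2
    rcases Nat.lt_or_ge i 2 with hi | hi
    · obtain rfl : i = 1 := by omega
      have hB := (typeII hj1 hj2 h).isDeco_fl_rpath_nverts hA |>.1
      have := typeIV hj1 hj2 (typeII hj1 hj2 h) base
      rwa [show rpath (.node [.leaf (-1)]) = 1 from rfl, Nat.cast_one,
        ← hB.rightmostLabel.deltaT_one (DecoAt.neg_one_le hB)] at this
    · obtain ⟨k, rfl⟩ : ∃ k, i = k + 1 := ⟨i - 1, by omega⟩
      have hk : 1 ≤ k := by omega
      rw [attachR_deltaT hk (by omega) hj2, ← attachR_deltaT hj1 (by omega) (by omega)]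
      exact typeII (by omega) (by rw [fl_attachR _ hk (by omega)]; omega) (ih hA' hk (by omega))
  | @typeIII ts B'' hne h ih =>
    have hts := hA.of_subset (List.subset_cons_self _ _) hne
    have hB'' := (h.isDeco_fl_rpath_nverts hts).1
    rw [rpath_node_cons hne] at h2
    have ih' := ih hts h1 h2
    obtain ⟨ts', hts', hne'⟩ := ih'.exists_node_left
    rw [attachR_node_cons hne h1, hts', DTree.children, ← hB''.rightmostLabel.growR_deltaT h1]
    exact typeIII hne' (hts' ▸ ih')
  | @typeIV A1 A2 U1 U2 j hj1 hj2 hA' hB' _ ihB =>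
    obtain ⟨bs, rfl, hbs⟩ := hB'.exists_node_left
    rw [oplusT_node] at hA
    have hA2 := hA.of_subset (List.subset_cons_self _ _) hbs
    have hU1 := (hA'.isDeco_fl_rpath_nverts (hA.of_subset (by simp) (by simp))).1
    have hU2 := (hB'.isDeco_fl_rpath_nverts hA2).1
    rw [rpath_oplusT hbs] at h2
    rw [attachR_oplusT hbs h1, ← hU2.rightmostLabel.replaceR_addExceptLast_deltaT
      hU1.rightmostLabel (DecoAt.neg_one_le hU1) hU2.one_le_rpath h1]
    have := typeIV hj1 hj2 hA' (ihB hA2 h1 h2)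
    rwa [rpath_deltaT, Nat.cast_succ] at this


theorem growR {B A : DTree} (h : HT B A) (hB : IsDeco B) :
    HT (growR B) (.node (.leaf (-1) :: A.children)) := by
  induction h with
  | base => exact typeII (i := 1) le_rfl le_rfl base
  | @typeII B1 A1 j hj1 hj2 h ih =>
    have hB1 := h.isDeco_of_deltaT hB
    obtain ⟨as, rfl, has⟩ := (h.isDeco_fl_rpath_nverts hB1).1.exists_node
    have hB1r := hB1.rightmostLabel
    rw [hB1r.growR_deltaT hj1, ← attachR_node_cons has hj1]
    exact typeII hj1 (hB1r.fl_growR ▸ hj2) (ih hB1)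
  | @typeIII bs A'' hne h ih =>
    have hbs := hB.of_subset (List.subset_cons_self _ _) hne
    obtain ⟨as, rfl, has⟩ := (h.isDeco_fl_rpath_nverts hbs).1.exists_node
    obtain ⟨ts', hts', hne'⟩ := (ih hbs).exists_node_left
    rw [growR_node_cons hne, hts', DTree.children, ← growR_node_cons has]
    exact typeIII hne' (hts' ▸ ih hbs)
  | @typeIV B1 B2 A1 A2 j hj1 hj2 hA hB2 _ ihB =>
    obtain ⟨bs, rfl, hbs⟩ := hB2.exists_node_left
    have hbs' := hB.of_subset (List.subset_cons_self _ _) hbs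
    obtain ⟨as, rfl, has⟩ := (hB2.isDeco_fl_rpath_nverts hbs').1.exists_node
    rw [growR_oplusT hbs, ← replaceR_node_cons _ has, ← rpath_node_cons (c := .leaf (-1)) has]
    exact typeIV hj1 hj2 hA (ihB hbs')


theorem replaceR {R S P Q : DTree} {j : ℕ} (h : HT R S) (hR : IsDeco R) (hPQ : HT P (deltaT Q j))
    (hP : IsDeco P) : HT (replaceR (addExceptLast (rpath R) P) R) (oplusT Q j S) := by
  induction h with
  | base =>
    rw [show rpath (.node [.leaf (-1)]) = 1 from rfl, Nat.cast_one,
      ← hP.rightmostLabel.deltaT_one (DecoAt.neg_one_le hP)]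
    exact typeII le_rfl hP.rightmostLabel.one_le_fl hPQ
  | @typeII R1 S1 k hk1 hk2 h ih =>
    have hR1 := h.isDeco_of_deltaT hR
    obtain ⟨ss, rfl, hss⟩ := (h.isDeco_fl_rpath_nverts hR1).1.exists_node
    have hR1r := hR1.rightmostLabel
    have hPr := hP.rightmostLabel
    have hge := DecoAt.neg_one_le hP
    rw [rpath_deltaT, Nat.cast_succ,
      hR1r.replaceR_addExceptLast_deltaT hPr hge hR1.one_le_rpath hk1, ← attachR_oplusT hss hk1]
    exact typeII hk1 (by rwa [hR1r.fl_replaceR_addExceptLast hPr hge hR1.one_le_rpath]) (ih hR1)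
  | @typeIII rs S'' hne h ih =>
    have hrs := hR.of_subset (List.subset_cons_self _ _) hne
    obtain ⟨ss, rfl, hss⟩ := (h.isDeco_fl_rpath_nverts hrs).1.exists_node
    obtain ⟨ts', hts', hne'⟩ := (ih hrs).exists_node_left
    rw [rpath_node_cons hne, replaceR_node_cons _ hne, hts', DTree.children, ← growR_oplusT hss]
    exact typeIII hne' (hts' ▸ ih hrs)
  | @typeIV R1 R2 S1 S2 k hk1 hk2 hA hB _ ihB =>
    obtain ⟨rs, rfl, hrs⟩ := hB.exists_node_left
    have hrs' := hR.of_subset (List.subset_cons_self _ _) hrs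
    obtain ⟨ss, rfl, hss⟩ := (hB.isDeco_fl_rpath_nverts hrs').1.exists_node
    rw [rpath_oplusT hrs, replaceR_oplusT hrs, ← replaceR_oplusT hss,
      ← rpath_oplusT (Q := Q) (j := j) hss]
    exact typeIV hk1 hk2 hA (ihB hrs')

theorem symm {T U : DTree} (h : HT T U) (hT : IsDeco T) : HT U T := by
  induction h with
  | base => exact base
  | @typeII T' U' i h1 h2 h ih =>
    have hT' := h.isDeco_of_deltaT hT
    obtain ⟨hU', -, hrp, -⟩ := h.isDeco_fl_rpath_nverts hT'
    exact (ih hT').attachR hU' h1 (hrp ▸ h2)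
  | @typeIII ts U'' hne h ih =>
    have hts := hT.of_subset (List.subset_cons_self _ _) hne
    exact (ih hts).growR (h.isDeco_fl_rpath_nverts hts).1
  | @typeIV T1 T2 U1 U2 i h1 h2 hA hB ihA ihB =>
    obtain ⟨ts, rfl, hne⟩ := hB.exists_node_left
    rw [oplusT_node] at hT
    have hD : IsDeco (deltaT T1 i) := hT.of_subset (by simp) (by simp)
    have hts := hT.of_subset (List.subset_cons_self _ _) hne
    exact (ihB hts).replaceR (hB.isDeco_fl_rpath_nverts hts).1 (ihA hD)
      (hA.isDeco_fl_rpath_nverts hD).1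

end HT

theorem stmt15 (T U : DTree) (hT : IsDeco T) (h : HT T U) :
    IsDeco U ∧ nedges U = nedges T ∧ HT U T := by
  obtain ⟨hU, -, -, hnv⟩ := h.isDeco_fl_rpath_nverts hT
  exact ⟨hU, by rw [nedges, nedges, hnv], h.symm hT⟩
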